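/- arXiv:0908.1797 — 5 statements merged into one kernel-verified Lean document; each statement's English description precedes it below -/
import Mathlib

section
/- In the synchronous delay/relay ring protocol, the total number of tokens Σᵢ (rᵢ + qᵢ) is invariant under execution of one global round. -/
/-! Locally, a round moves every queued token one step forward into the successor's `r` and
then possibly one token from `r` back into `q`, so `rᵢ' + qᵢ' = rᵢ + q_{i-1}`; summing over the
ring, the shift `i ↦ i - 1` is a bijection, so the total is preserved. -/

/-- Global state of the delay/relay ring protocol. -/
structure St (n : ℕ) where
  r : ZMod n → ℕ
  q : ZMod n → ℕ
  c : ZMod n → ℕ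

/-- Release condition of process `i`: a delay process (member of `D`) releases
when its counter is `0` and it has a token; a relay process releases whenever
it has a token (counting the token arriving from the predecessor). -/
def rel {n : ℕ} (D : Finset (ZMod n)) (σ : St n) (i : ZMod n) : Prop :=
  if i ∈ D then σ.c i = 0 ∧ 0 < σ.r i + σ.q (i - 1)
  else 0 < σ.r i + σ.q (i - 1)

instance {n : ℕ} (D : Finset (ZMod n)) (σ : St n) (i : ZMod n) :
    Decidable (rel D σ i) := by unfold rel; infer_instance

/-- One synchronous global round of the delay/relay protocol: every process
absorbs the predecessor's queued token, the predecessor's queue is zeroed,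
and a process enqueues (at most) one token when its release condition holds;
a delay process resets its counter to `C` upon release and otherwise
decrements it when positive. -/
def roundFn {n : ℕ} (D : Finset (ZMod n)) (C : ℕ) (σ : St n) : St n where
  r := fun i => σ.r i + σ.q (i - 1) - (if rel D σ i then 1 else 0)
  q := fun i => if rel D σ i then 1 else 0
  c := fun i => if i ∈ D then (if rel D σ i then C else σ.c i - 1) else σ.c i

section

variable {n : ℕ} (D : Finset (ZMod n)) (C : ℕ) (σ : St n) (i : ZMod n)

lemma pos_of_rel (h : rel D σ i) : 0 < σ.r i + σ.q (i - 1) := by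
  unfold rel at h
  split_ifs at h
  exacts [h.2, h]

-- Releasing only when a token is present is what keeps the truncated subtraction in `r` exact.
lemma roundFn_r_add_q :
    (roundFn D C σ).r i + (roundFn D C σ).q i = σ.r i + σ.q (i - 1) := by
  simp only [roundFn]
  split_ifs with h
  · have := pos_of_rel D σ i h
    omega
  · rfl

end

/-- The total number of tokens `Σᵢ (rᵢ + qᵢ)` is invariant under one global
round of the delay/relay protocol. -/
theorem stmt_1 (n : ℕ) [NeZero n] (D : Finset (ZMod n)) (C : ℕ) (σ : St n) :
    ∑ i : ZMod n, ((roundFn D C σ).r i + (roundFn D C σ).q i) =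
      ∑ i : ZMod n, (σ.r i + σ.q i) := by
  rw [Finset.sum_congr rfl fun i _ => roundFn_r_add_q D C σ i, Finset.sum_add_distrib,
    Finset.sum_add_distrib]
  exact congrArg _ ((Equiv.subRight 1).sum_comp σ.q)
end

section
/- If in every round at most one token arrives at process i and arrivals to i are separated by at least C+1 rounds, while process i (running the delay program with counter domain [0,C]) releases a token whenever cᵢ = 0 ∧ rᵢ > 0 (resetting cᵢ to C) and otherwise decrements cᵢ when cᵢ > 0, then throughout the execution rᵢ never exceeds 1 + rᵢ(σ), where rᵢ(σ) is its initial value. -/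
/-- One step of a single delay process with counter domain `[0,C]`:
absorb a (possible) arrival into `r`; then release a token when
`c = 0 ∧ r > 0` (resetting `c ← C`), otherwise decrement `c` when positive.
State is `(r, c) : ℕ × ℕ`. -/
def dstep (C : ℕ) (arr : Bool) (s : ℕ × ℕ) : ℕ × ℕ :=
  let r' := s.1 + (if arr then 1 else 0)
  if s.2 = 0 ∧ 0 < r' then (r' - 1, C) else (r', s.2 - 1)

/-- Trajectory of the delay process from initial state `σ` under arrival
sequence `a`. -/
def traj (C : ℕ) (a : ℕ → Bool) (σ : ℕ × ℕ) : ℕ → ℕ × ℕ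
  | 0 => σ
  | t + 1 => dstep C (a t) (traj C a σ t)

/-! A backlog of `r₀ + 1` resting tokens can only be reached by an arrival while the counter is
positive; from then on the counter runs out strictly before the next arrival (arrivals are at
least `C + 1` apart), so a token is released before the backlog could grow again. -/

section dstep

variable {C r c : ℕ}

theorem dstep_true_of_eq_zero : dstep C true (r, 0) = (r, C) := by simp [dstep]

theorem dstep_true_of_ne_zero (hc : c ≠ 0) : dstep C true (r, c) = (r + 1, c - 1) := by
  simp [dstep, hc]

theorem dstep_false_of_release (hrel : c = 0 ∧ 0 < r) : dstep C false (r, c) = (r - 1, C) := by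
  simp [dstep, hrel]

theorem dstep_false_of_not_release (hrel : ¬(c = 0 ∧ 0 < r)) :
    dstep C false (r, c) = (r, c - 1) := by
  simp [dstep, hrel]

end dstep

/-- `r₀` is the initial backlog; a full backlog `r₀ + 1` at time `t` with counter `c` forces the
rounds `t, …, t + c - 1` to be free of arrivals. -/
structure DelayInv (C r₀ : ℕ) (a : ℕ → Bool) (t : ℕ) (s : ℕ × ℕ) : Prop where
  counter_le : s.2 ≤ C
  resting_le : s.1 ≤ r₀ + 1
  quiet_of_full : s.1 = r₀ + 1 → ∀ t', t ≤ t' → a t' = true → t + s.2 ≤ t'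

namespace DelayInv

variable {C r₀ : ℕ} {a : ℕ → Bool} {t : ℕ} {s : ℕ × ℕ}

theorem initial {r c : ℕ} (hc : c ≤ C) : DelayInv C r a 0 (r, c) :=
  ⟨hc, by omega, by omega⟩

theorem step (hgap : ∀ t t' : ℕ, t < t' → a t = true → a t' = true → C + 1 ≤ t' - t)
    (h : DelayInv C r₀ a t s) : DelayInv C r₀ a (t + 1) (dstep C (a t) s) := by
  obtain ⟨r, c⟩ := s
  obtain ⟨hcC, hr, hquiet⟩ := h
  have hsep : a t = true → ∀ t', t + 1 ≤ t' → a t' = true → t + C + 1 ≤ t' :=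
    fun ha t' ht' ha' => by have := hgap t t' ht' ha ha'; omega
  cases harr : a t
  · by_cases hrel : c = 0 ∧ 0 < r
    · rw [dstep_false_of_release hrel]
      exact ⟨le_rfl, by omega, by omega⟩
    · rw [dstep_false_of_not_release hrel]
      refine ⟨by omega, hr, fun hfull t' ht' ha' => ?_⟩
      have := hquiet hfull t' (by omega) ha'
      have : t ≠ t' := by rintro rfl; simp [harr] at ha'
      omega
  · by_cases hc0 : c = 0
    · rw [hc0, dstep_true_of_eq_zero]
      exact ⟨le_rfl, hr, fun _ t' ht' ha' => by have := hsep harr t' ht' ha'; omega⟩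
    · have hr_lt : r < r₀ + 1 := by
        refine lt_of_le_of_ne hr fun hfull => hc0 ?_
        have := hquiet hfull t le_rfl harr
        omega
      rw [dstep_true_of_ne_zero hc0]
      exact ⟨by omega, by omega, fun _ t' ht' ha' => by have := hsep harr t' ht' ha'; omega⟩

end DelayInv

/-- If at most one token arrives per round and arrivals are separated by at
least `C+1` rounds, then the number of resting tokens `r` never exceeds
`1 + r(σ)`, its initial value plus one. -/
theorem stmt_3 (C : ℕ) (a : ℕ → Bool)
    (hgap : ∀ t t' : ℕ, t < t' → a t = true → a t' = true → C + 1 ≤ t' - t)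
    (σ : ℕ × ℕ) (hc : σ.2 ≤ C) :
    ∀ t : ℕ, (traj C a σ t).1 ≤ 1 + σ.1 := by
  intro t
  have hinv : DelayInv C σ.1 a t (traj C a σ t) := by
    induction t with
    | zero => exact DelayInv.initial hc
    | succ t ih => exact ih.step hgap
  have := hinv.resting_le
  omega
end

section
/- For a single delay process with counter domain [0,C] receiving tokens at a rate of at most one per C+1 rounds, if at some time t the state satisfies r = 0 ∧ c = 0, then r = 0 holds at the start of every subsequent round (the resting bound is zero forever after). -/
/-!
While `r = 0`, the process can only fail to stay empty if a token arrives while the counter is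
still running down. So we carry the invariant "`r = 0` and no arrival before the counter reaches
`0`". An arrival then meets `c = 0` and is released at once, resetting `c ← C`; the gap of `C + 1`
rounds guarantees that no further arrival falls in the next `C` rounds, restoring the invariant.
-/

theorem dstep_false_of_fst_eq_zero (C c : ℕ) : dstep C false (0, c) = (0, c - 1) := by
  simp [dstep]

theorem dstep_true_zero_zero (C : ℕ) : dstep C true (0, 0) = (0, C) := by
  simp [dstep]

def IsQuiet (C : ℕ) (a : ℕ → Bool) (σ : ℕ × ℕ) (t : ℕ) : Prop :=
  (traj C a σ t).1 = 0 ∧ ∀ s, t ≤ s → s < t + (traj C a σ t).2 → a s = false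

theorem IsQuiet.succ {C : ℕ} {a : ℕ → Bool} {σ : ℕ × ℕ} {n : ℕ}
    (hgap : ∀ t t' : ℕ, t < t' → a t = true → a t' = true → C + 1 ≤ t' - t)
    (h : IsQuiet C a σ n) : IsQuiet C a σ (n + 1) := by
  obtain ⟨hr, hquiet⟩ := h
  have hstate : traj C a σ n = (0, (traj C a σ n).2) := Prod.ext hr rfl
  generalize (traj C a σ n).2 = c at hstate hquiet
  unfold IsQuiet
  rw [traj, hstate]
  cases ha : a n with
  | false =>
    rw [dstep_false_of_fst_eq_zero]
    exact ⟨rfl, fun s hs hs' => hquiet s (by omega) (by simp only at hs'; omega)⟩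
  | true =>
    obtain rfl : c = 0 := by
      by_contra hc
      simpa [ha] using hquiet n le_rfl (by omega)
    rw [dstep_true_zero_zero]
    refine ⟨rfl, fun s hs hs' => Bool.eq_false_iff.2 fun has => ?_⟩
    have := hgap n s (by omega) ha has
    simp only at hs'
    omega

/-- If arrivals are separated by at least `C+1` rounds and at some time `t`
the delay process satisfies `r = 0 ∧ c = 0`, then `r = 0` holds at the start
of every subsequent round: the resting bound is zero forever after. -/
theorem stmt_4 (C : ℕ) (a : ℕ → Bool)
    (hgap : ∀ t t' : ℕ, t < t' → a t = true → a t' = true → C + 1 ≤ t' - t)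
    (σ : ℕ × ℕ) (t : ℕ)
    (ht : (traj C a σ t).1 = 0 ∧ (traj C a σ t).2 = 0) :
    ∀ t' : ℕ, t ≤ t' → (traj C a σ t').1 = 0 := by
  have hquiet_t : IsQuiet C a σ t := ⟨ht.1, fun s hs hs' => by rw [ht.2] at hs'; omega⟩
  have hquiet : ∀ t', t ≤ t' → IsQuiet C a σ t' :=
    Nat.le_induction hquiet_t fun _ _ h => h.succ hgap
  exact fun t' htt' => (hquiet t' htt').1
end

section
/- Starting from a legitimate state of the delay/relay protocol (every token is queued, all q ≤ 1, pairwise clockwise token distances exceed C, and each delay process's counter records the clockwise distance to the nearest approaching token as cᵢ = C - Rdistᵢ when cᵢ > 0 and qᵢ = 0, cᵢ = C when qᵢ = 1), executing one global round yields another legitimate state. -/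
/-- Process `i` holds a token. -/
def tok {n : ℕ} (σ : St n) (i : ZMod n) : Prop := 0 < σ.r i + σ.q i

/-- Minimum clockwise distance from `i` to a process holding a token. -/
noncomputable def Rdist {n : ℕ} (σ : St n) (i : ZMod n) : ℕ :=
  sInf {d : ℕ | tok σ (i + (d : ZMod n))}

/-- Minimum counterclockwise distance from `i` to a process holding a token. -/
noncomputable def Ldist {n : ℕ} (σ : St n) (i : ZMod n) : ℕ :=
  sInf {d : ℕ | tok σ (i - (d : ZMod n))}

/-- Minimum positive clockwise distance between token-holding processes. -/
noncomputable def tokdist {n : ℕ} (σ : St n) : ℕ :=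
  sInf {d : ℕ | 0 < d ∧ ∃ i : ZMod n, tok σ i ∧ tok σ (i + (d : ZMod n))}

/-- Legitimate state: all `m` tokens are queued (none resting), queues are
`0/1`-valued, pairwise clockwise token distances exceed `C`, and the counter
of each delay process records the clockwise distance of the nearest
approaching token. -/
noncomputable def Legit {n : ℕ} [NeZero n] (D : Finset (ZMod n)) (C m : ℕ) (σ : St n) : Prop :=
  (∑ i : ZMod n, σ.q i) = m ∧ (∑ i : ZMod n, σ.r i) = 0 ∧
  (∀ i : ZMod n, σ.q i ≤ 1) ∧
  C < tokdist σ ∧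
  (∀ i ∈ D, 0 < σ.c i → σ.q i = 0 → Rdist σ i = C - σ.c i) ∧
  (∀ i ∈ D, σ.q i = 0 → σ.c i < Ldist σ i) ∧
  (∀ i ∈ D, σ.q i = 1 → σ.c i = C)

open Finset

section Distances

variable {n : ℕ} {σ τ : St n} {i j : ZMod n} {d : ℕ}

theorem Rdist_le (h : tok σ (i + d)) : Rdist σ i ≤ d := Nat.sInf_le h

theorem Ldist_le (h : tok σ (i - d)) : Ldist σ i ≤ d := Nat.sInf_le h

theorem tokdist_le (hd : 0 < d) (hj : tok σ j) (hjd : tok σ (j + d)) : tokdist σ ≤ d :=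
  Nat.sInf_le ⟨hd, j, hj, hjd⟩

theorem Rdist_eq_of_tok_iff (h : ∀ i, tok τ i ↔ tok σ (i - 1)) (i : ZMod n) :
    Rdist τ i = Rdist σ (i - 1) := by
  simp only [Rdist, h, add_sub_right_comm]

theorem Ldist_eq_of_tok_iff (h : ∀ i, tok τ i ↔ tok σ (i - 1)) (i : ZMod n) :
    Ldist τ i = Ldist σ (i - 1) := by
  simp only [Ldist, h, sub_right_comm]

theorem tokdist_eq_of_tok_iff (h : ∀ i, tok τ i ↔ tok σ (i - 1)) : tokdist τ = tokdist σ := by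
  simp only [tokdist, h, add_sub_right_comm]
  congr! 4 with d
  exact (Equiv.subRight (1 : ZMod n)).surjective.exists
    (p := fun j => tok σ j ∧ tok σ (j + d)) |>.symm

variable [NeZero n]

theorem tok_add_Rdist (hne : ∃ j, tok σ j) (i : ZMod n) : tok σ (i + Rdist σ i) := by
  obtain ⟨j, hj⟩ := hne
  obtain ⟨d, hd⟩ := ZMod.natCast_zmod_surjective (j - i)
  exact Nat.sInf_mem (s := {d : ℕ | tok σ (i + d)})
    ⟨d, show tok σ (i + d) by rwa [hd, add_sub_cancel]⟩

theorem tok_sub_Ldist (hne : ∃ j, tok σ j) (i : ZMod n) : tok σ (i - Ldist σ i) := by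
  obtain ⟨j, hj⟩ := hne
  obtain ⟨d, hd⟩ := ZMod.natCast_zmod_surjective (i - j)
  exact Nat.sInf_mem (s := {d : ℕ | tok σ (i - d)})
    ⟨d, show tok σ (i - d) by rwa [hd, sub_sub_cancel]⟩

theorem Rdist_eq_zero_iff (hne : ∃ j, tok σ j) : Rdist σ i = 0 ↔ tok σ i := by
  refine ⟨fun h => ?_, fun h => Nat.le_zero.1 (Rdist_le (d := 0) (by simpa using h))⟩
  simpa [h] using tok_add_Rdist hne i

theorem Ldist_eq_zero_iff (hne : ∃ j, tok σ j) : Ldist σ i = 0 ↔ tok σ i := by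
  refine ⟨fun h => ?_, fun h => Nat.le_zero.1 (Ldist_le (d := 0) (by simpa using h))⟩
  simpa [h] using tok_sub_Ldist hne i

theorem Rdist_sub_one_of_not_tok (hne : ∃ j, tok σ j) (h : ¬ tok σ (i - 1)) :
    Rdist σ (i - 1) = Rdist σ i + 1 := by
  have h1 : 1 ≤ Rdist σ (i - 1) :=
    Nat.one_le_iff_ne_zero.2 (mt (Rdist_eq_zero_iff hne).1 h)
  unfold Rdist at h1 ⊢
  rw [← Nat.sInf_add (p := fun d : ℕ => tok σ (i - 1 + d)) h1]
  simp only [Nat.cast_add, Nat.cast_one, sub_add_add_cancel]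

theorem Ldist_of_not_tok (hne : ∃ j, tok σ j) (h : ¬ tok σ i) :
    Ldist σ i = Ldist σ (i - 1) + 1 := by
  have h1 : 1 ≤ Ldist σ i :=
    Nat.one_le_iff_ne_zero.2 (mt (Ldist_eq_zero_iff hne).1 h)
  unfold Ldist at h1 ⊢
  rw [← Nat.sInf_add (p := fun d : ℕ => tok σ (i - d)) h1]
  simp only [Nat.cast_add, Nat.cast_one, sub_add_eq_sub_sub_swap]

end Distances

namespace Legit

variable {n m C : ℕ} [NeZero n] {D : Finset (ZMod n)} {σ : St n} {i : ZMod n}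

theorem sum_q (hσ : Legit D C m σ) : ∑ i, σ.q i = m := hσ.1

theorem r_eq_zero (hσ : Legit D C m σ) (i : ZMod n) : σ.r i = 0 :=
  sum_eq_zero_iff.1 hσ.2.1 i (mem_univ i)

theorem q_le_one (hσ : Legit D C m σ) (i : ZMod n) : σ.q i ≤ 1 := hσ.2.2.1 i

theorem lt_tokdist (hσ : Legit D C m σ) : C < tokdist σ := hσ.2.2.2.1

theorem Rdist_eq_sub_c (hσ : Legit D C m σ) (hi : i ∈ D) (hc : 0 < σ.c i) (hq : σ.q i = 0) :
    Rdist σ i = C - σ.c i :=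
  hσ.2.2.2.2.1 i hi hc hq

theorem c_lt_Ldist (hσ : Legit D C m σ) (hi : i ∈ D) (hq : σ.q i = 0) : σ.c i < Ldist σ i :=
  hσ.2.2.2.2.2.1 i hi hq

theorem c_eq_of_q_eq_one (hσ : Legit D C m σ) (hi : i ∈ D) (hq : σ.q i = 1) : σ.c i = C :=
  hσ.2.2.2.2.2.2 i hi hq

theorem tok_iff (hσ : Legit D C m σ) : tok σ i ↔ σ.q i = 1 := by
  have := hσ.q_le_one i
  rw [tok, hσ.r_eq_zero]
  omega

theorem q_eq_zero_iff (hσ : Legit D C m σ) : σ.q i = 0 ↔ ¬ tok σ i := by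
  have := hσ.q_le_one i
  rw [hσ.tok_iff]
  omega

theorem exists_tok (hσ : Legit D C m σ) (hm : 1 ≤ m) : ∃ j, tok σ j := by
  obtain ⟨j, -, hj⟩ := exists_ne_zero_of_sum_ne_zero (s := univ) (f := σ.q) (by rw [hσ.sum_q]; omega)
  exact ⟨j, by rw [tok]; omega⟩

theorem c_eq_of_tok (hσ : Legit D C m σ) (hi : i ∈ D) (h : tok σ i) : σ.c i = C :=
  hσ.c_eq_of_q_eq_one hi (hσ.tok_iff.1 h)

theorem Rdist_add_c (hσ : Legit D C m σ) (hne : ∃ j, tok σ j) (hi : i ∈ D) (hc : 0 < σ.c i) :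
    Rdist σ i + σ.c i = C := by
  by_cases h : tok σ i
  · rw [(Rdist_eq_zero_iff hne).2 h, hσ.c_eq_of_tok hi h, zero_add]
  · have hR := hσ.Rdist_eq_sub_c hi hc (hσ.q_eq_zero_iff.2 h)
    have := mt (Rdist_eq_zero_iff hne).1 h
    omega

theorem c_le_Ldist_sub_one (hσ : Legit D C m σ) (hne : ∃ j, tok σ j) (hi : i ∈ D) :
    σ.c i ≤ Ldist σ (i - 1) := by
  by_cases h : tok σ i
  · set L := Ldist σ (i - 1)
    have hgap : tokdist σ ≤ L + 1 := by
      refine tokdist_le L.succ_pos (tok_sub_Ldist hne (i - 1)) ?_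
      rwa [show i - 1 - (L : ZMod n) + ((L + 1 : ℕ) : ZMod n) = i by push_cast; ring]
    have := hσ.lt_tokdist
    rw [hσ.c_eq_of_tok hi h]
    omega
  · have hL := hσ.c_lt_Ldist hi (hσ.q_eq_zero_iff.2 h)
    rw [Ldist_of_not_tok hne h] at hL
    omega

theorem rel_iff (hσ : Legit D C m σ) (hne : ∃ j, tok σ j) : rel D σ i ↔ tok σ (i - 1) := by
  have hin : 0 < σ.r i + σ.q (i - 1) ↔ tok σ (i - 1) := by
    rw [tok, hσ.r_eq_zero, hσ.r_eq_zero]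
  unfold rel
  split_ifs with hi
  · rw [hin, and_iff_right_iff_imp]
    intro h
    have := hσ.c_le_Ldist_sub_one hne hi
    rw [(Ldist_eq_zero_iff hne).2 h] at this
    omega
  · exact hin

theorem q_roundFn (hσ : Legit D C m σ) (hne : ∃ j, tok σ j) (i : ZMod n) :
    (roundFn D C σ).q i = σ.q (i - 1) := by
  have := hσ.q_le_one (i - 1)
  simp only [roundFn, hσ.rel_iff hne, hσ.tok_iff]
  split_ifs <;> omega

theorem r_roundFn (hσ : Legit D C m σ) (hne : ∃ j, tok σ j) (i : ZMod n) :
    (roundFn D C σ).r i = 0 := by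
  have := hσ.q_le_one (i - 1)
  simp only [roundFn, hσ.rel_iff hne, hσ.tok_iff, hσ.r_eq_zero]
  split_ifs <;> omega

theorem tok_roundFn_iff (hσ : Legit D C m σ) (hne : ∃ j, tok σ j) (i : ZMod n) :
    tok (roundFn D C σ) i ↔ tok σ (i - 1) := by
  rw [tok, hσ.r_roundFn hne, hσ.q_roundFn hne, tok, hσ.r_eq_zero]

theorem c_roundFn_of_tok (hσ : Legit D C m σ) (hne : ∃ j, tok σ j) (hi : i ∈ D)
    (h : tok σ (i - 1)) : (roundFn D C σ).c i = C := by
  simp only [roundFn, hi, if_true, (hσ.rel_iff hne).2 h]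

theorem c_roundFn_of_not_tok (hσ : Legit D C m σ) (hne : ∃ j, tok σ j) (hi : i ∈ D)
    (h : ¬ tok σ (i - 1)) : (roundFn D C σ).c i = σ.c i - 1 := by
  simp only [roundFn, hi, if_true, mt (hσ.rel_iff hne).1 h, if_false]

end Legit

theorem stmt_7_general (n m C : ℕ) [NeZero n] (D : Finset (ZMod n))
    (hm : 1 ≤ m) (σ : St n)
    (hσ : Legit D C m σ) : Legit D C m (roundFn D C σ) := by
  have hne := hσ.exists_tok hm
  have hshift := hσ.tok_roundFn_iff hne
  refine ⟨?_, ?_, ?_, ?_, ?_, ?_, ?_⟩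
  · simp only [hσ.q_roundFn hne]
    exact ((Equiv.subRight 1).sum_comp σ.q).trans hσ.sum_q
  · exact sum_eq_zero fun i _ => hσ.r_roundFn hne i
  · exact fun i => hσ.q_roundFn hne i ▸ hσ.q_le_one (i - 1)
  · exact tokdist_eq_of_tok_iff hshift ▸ hσ.lt_tokdist
  · intro i hi hc hq
    rw [hσ.q_roundFn hne, hσ.q_eq_zero_iff] at hq
    rw [hσ.c_roundFn_of_not_tok hne hi hq] at hc ⊢
    have := hσ.Rdist_add_c hne hi (by omega)
    rw [Rdist_eq_of_tok_iff hshift, Rdist_sub_one_of_not_tok hne hq]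
    omega
  · intro i hi hq
    rw [hσ.q_roundFn hne, hσ.q_eq_zero_iff] at hq
    rw [hσ.c_roundFn_of_not_tok hne hi hq, Ldist_eq_of_tok_iff hshift]
    have := hσ.c_le_Ldist_sub_one hne hi
    have := mt (Ldist_eq_zero_iff hne).1 hq
    omega
  · intro i hi hq
    rw [hσ.q_roundFn hne, ← hσ.tok_iff] at hq
    exact hσ.c_roundFn_of_tok hne hi hq

/-- Closure: starting from a legitimate state of the delay/relay protocol,
executing one global round yields another legitimate state. -/
theorem stmt_7 (n m C : ℕ) [NeZero n] (D : Finset (ZMod n))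
    (hm : 1 ≤ m) (hsep : m * (C + 1) ≤ n) (σ : St n)
    (hσ : Legit D C m σ) : Legit D C m (roundFn D C σ) :=
  stmt_7_general n m C D hm σ hσ
end

section
/- Suppose a delay process has counter value c = k > 0 when a token arrives at time t, and its counter resets to C at each release while decrementing otherwise. If subsequent tokens arrive with inter-arrival gaps C+1+t₁, C+1+t₂, ..., C+1+t_ℓ (all tⱼ ≥ 0), then the counter value upon the j-th subsequent arrival is k - Σ_{s≤j} t_s, provided Σ_{s≤j} t_s ≤ k. In particular, if Σ_{s} t_s > k at some point, the counter reaches 0 strictly before a token arrives. -/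
/-! Between two arrivals the counter first runs down from its current value `m ≤ C` to `0`,
is reset to `C` one round later, and then keeps counting down; a gap of `C + 1 + t` therefore
leaves it at `m - t`, as long as `t ≤ m`. Summing over the gaps gives the counter at every
arrival, and since that value is at most `C`, its countdown to `0` ends before the next
arrival. -/

section DelayCounter

variable {C : ℕ} {c : ℕ → ℕ} (hdec : ∀ s, 0 < c s → c (s + 1) = c s - 1)
include hdec

theorem counter_add_eq_sub {t m : ℕ} (hm : c t = m) {i : ℕ} (hi : i ≤ m) :
    c (t + i) = m - i := by
  induction i with
  | zero => simpa using hm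
  | succ i ih =>
    rw [← add_assoc, hdec _ (by omega), ih (by omega)]
    omega

variable (hrel : ∀ s, c s = 0 → c (s + 1) = C)
include hrel

theorem counter_add_period {t m u : ℕ} (hm : c t = m) (hmC : m ≤ C) (hum : u ≤ m) :
    c (t + (C + 1) + u) = m - u := by
  have hzero : c (t + m) = 0 := by simpa using counter_add_eq_sub hdec hm le_rfl
  have hreset : c (t + m + 1) = C := hrel _ hzero
  rw [show t + (C + 1) + u = t + m + 1 + (C - m + u) by omega,
    counter_add_eq_sub hdec hreset (by omega)]
  omega

theorem counter_at_arrival {k : ℕ} (hkC : k ≤ C) {arr tseq : ℕ → ℕ}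
    (hgap : ∀ j, arr (j + 1) = arr j + (C + 1) + tseq j) (h0 : c (arr 0) = k) :
    ∀ j, ∑ s ∈ Finset.range j, tseq s ≤ k → c (arr j) = k - ∑ s ∈ Finset.range j, tseq s := by
  intro j
  induction j with
  | zero => simpa using h0
  | succ j ih =>
    intro hle
    rw [Finset.sum_range_succ] at hle ⊢
    rw [hgap, counter_add_period hdec hrel (ih (by omega)) (by omega) (by omega)]
    omega

end DelayCounter

theorem stmt_12_general (C k : ℕ) (hkC : k ≤ C)
    (c : ℕ → ℕ) (arr tseq : ℕ → ℕ)
    (hdec : ∀ s, 0 < c s → c (s + 1) = c s - 1)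
    (hrel : ∀ s, c s = 0 → c (s + 1) = C)
    (hgap : ∀ j, arr (j + 1) = arr j + (C + 1) + tseq j)
    (h0 : c (arr 0) = k) :
    (∀ j : ℕ, (∑ s ∈ Finset.range (j + 1), tseq s) ≤ k →
        c (arr (j + 1)) = k - ∑ s ∈ Finset.range (j + 1), tseq s) ∧
    (∀ j : ℕ, (∑ s ∈ Finset.range j, tseq s) ≤ k →
        k < (∑ s ∈ Finset.range (j + 1), tseq s) →
        ∃ s : ℕ, arr j ≤ s ∧ s < arr (j + 1) ∧ c s = 0) := by
  have harr := counter_at_arrival hdec hrel hkC hgap h0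
  refine ⟨fun j => harr (j + 1), fun j hle _ => ?_⟩
  set m := k - ∑ s ∈ Finset.range j, tseq s
  have hzero : c (arr j + m) = 0 := by simpa using counter_add_eq_sub hdec (harr j hle) le_rfl
  refine ⟨arr j + m, by omega, ?_, hzero⟩
  rw [hgap]
  omega

/-- A delay process with tokens always available to release: the counter
decrements by `1` each round while positive, and whenever it reaches `0` a
release resets it to `C`.  Tokens arrive at times `arr 0, arr 1, ...` with
inter-arrival gaps `C+1+tseq j`.  If the counter has value `k` with
`0 < k ≤ C` at the first arrival, then upon the `(j+1)`-st arrival the counter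
value is `k - Σ_{s ≤ j} tseq s`, provided that sum is at most `k`; and as soon
as the accumulated sum exceeds `k`, the counter reaches `0` strictly before
the next token arrives. -/
theorem stmt_12 (C k : ℕ) (hk : 0 < k) (hkC : k ≤ C)
    (c : ℕ → ℕ) (arr tseq : ℕ → ℕ)
    (hdec : ∀ s, 0 < c s → c (s + 1) = c s - 1)
    (hrel : ∀ s, c s = 0 → c (s + 1) = C)
    (hgap : ∀ j, arr (j + 1) = arr j + (C + 1) + tseq j)
    (h0 : c (arr 0) = k) :
    (∀ j : ℕ, (∑ s ∈ Finset.range (j + 1), tseq s) ≤ k →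
        c (arr (j + 1)) = k - ∑ s ∈ Finset.range (j + 1), tseq s) ∧
    (∀ j : ℕ, (∑ s ∈ Finset.range j, tseq s) ≤ k →
        k < (∑ s ∈ Finset.range (j + 1), tseq s) →
        ∃ s : ℕ, arr j ≤ s ∧ s < arr (j + 1) ∧ c s = 0) :=
  stmt_12_general C k hkC c arr tseq hdec hrel hgap h0
end
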